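/- arXiv:2602.03131 — 2 statements merged into one kernel-verified Lean document; each statement's English description precedes it below -/
import Mathlib

section
/- Let f : ℝ³_x × ℝ³_v → ℝ be a nonnegative measurable function with ‖f‖_{L∞} ≤ M and ∫∫ f(1+|v|)² dv dx < ∞. Then for every p with 1 ≤ p ≤ 5/4, the current j(x) = ∫_{ℝ³} v f(x,v) dv satisfies ‖ |j| ‖_{L^p(ℝ³_x)} ≤ C(M) · (1 + ∫∫_{ℝ⁶} (1+|v|)² f dv dx). -/
/-!
Fix `x` and split the velocity integral `∫ f |v| dv` at a radius `R`: inside the ball it is at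
most `M R |B_R| ∼ M R^(d+1)`, outside at most `R⁻¹ e(x)` with `e(x) = ∫ f (1+|v|)² dv`.
Balancing the two gives `|j(x)| ≤ C(M) e(x)^((d+1)/(d+2))`, while trivially `|j(x)| ≤ e(x)`.
Using the first bound where `e(x) > 1` and the second where `e(x) ≤ 1` yields
`|j(x)|^p ≤ C(M) e(x)` for `1 ≤ p ≤ (d+2)/(d+1)`, which integrates in `x`.
-/

open MeasureTheory ENNReal Metric

abbrev E3 := EuclideanSpace ℝ (Fin 3)

lemma rpow_le_one_add_self (T : ℝ≥0∞) {q : ℝ} (hq0 : 0 ≤ q) (hq1 : q ≤ 1) : T ^ q ≤ 1 + T := by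
  rcases le_total T 1 with hT | hT
  · exact (ENNReal.rpow_le_one hT hq0).trans le_self_add
  · calc T ^ q ≤ T ^ (1 : ℝ) := ENNReal.rpow_le_rpow_of_exponent_le hT hq1
      _ ≤ 1 + T := by rw [ENNReal.rpow_one]; exact le_add_self

lemma rpow_le_mul_of_le_of_le_mul_rpow {X e D : ℝ≥0∞} {θ p : ℝ} (hD : 1 ≤ D) (hθ : 0 < θ)
    (hp1 : 1 ≤ p) (hpθ : p ≤ θ⁻¹) (hXe : X ≤ e) (hXD : 1 < e → X ≤ D * e ^ θ) :
    X ^ p ≤ D ^ θ⁻¹ * e := by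
  have hp0 : 0 ≤ p := zero_le_one.trans hp1
  rcases le_or_gt e 1 with he | he
  · calc X ^ p ≤ X ^ (1 : ℝ) := ENNReal.rpow_le_rpow_of_exponent_ge (hXe.trans he) hp1
      _ ≤ 1 * e := by rw [ENNReal.rpow_one, one_mul]; exact hXe
      _ ≤ D ^ θ⁻¹ * e := by gcongr; exact ENNReal.one_le_rpow hD (inv_pos.2 hθ)
  · calc X ^ p ≤ (D * e ^ θ) ^ p := ENNReal.rpow_le_rpow (hXD he) hp0
      _ = D ^ p * e ^ (θ * p) := by rw [ENNReal.mul_rpow_of_nonneg _ _ hp0, ENNReal.rpow_mul]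
      _ ≤ D ^ θ⁻¹ * e ^ (1 : ℝ) := by
          refine mul_le_mul' (ENNReal.rpow_le_rpow_of_exponent_le hD hpθ)
            (ENNReal.rpow_le_rpow_of_exponent_le he.le ?_)
          rwa [le_inv_comm₀ (by positivity) hθ, inv_eq_one_div, le_div_iff₀ (by positivity)] at hpθ
      _ = D ^ θ⁻¹ * e := by rw [ENNReal.rpow_one]

section VelocityMoments

variable {E : Type*} [NormedAddCommGroup E] [NormedSpace ℝ E] [MeasurableSpace E] [BorelSpace E]
  [FiniteDimensional ℝ E] (μ : Measure E) [μ.IsAddHaarMeasure]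

lemma lintegral_mul_norm_le_of_radius {g : E → ℝ} {M R : ℝ} (hg0 : ∀ v, 0 ≤ g v)
    (hgM : ∀ v, g v ≤ M) (hR : 0 < R) :
    ∫⁻ v, ENNReal.ofReal (g v * ‖v‖) ∂μ ≤
      ENNReal.ofReal (M * R ^ (Module.finrank ℝ E + 1)) * μ (ball 0 1) +
        ENNReal.ofReal R⁻¹ * ∫⁻ v, ENNReal.ofReal (g v * (1 + ‖v‖) ^ 2) ∂μ := by
  have hM : 0 ≤ M := (hg0 0).trans (hgM 0)
  rw [← lintegral_add_compl _ (measurableSet_ball (x := (0 : E)) (ε := R))]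
  gcongr
  · calc ∫⁻ v in ball 0 R, ENNReal.ofReal (g v * ‖v‖) ∂μ
        ≤ ∫⁻ _ in ball 0 R, ENNReal.ofReal (M * R) ∂μ := by
          refine setLIntegral_mono' measurableSet_ball fun v hv => ENNReal.ofReal_le_ofReal ?_
          rw [mem_ball_zero_iff] at hv
          exact mul_le_mul (hgM v) hv.le (norm_nonneg v) hM
      _ = ENNReal.ofReal (M * R ^ (Module.finrank ℝ E + 1)) * μ (ball 0 1) := by
          rw [setLIntegral_const, Measure.addHaar_ball_of_pos μ 0 hR, ← mul_assoc,
            ← ENNReal.ofReal_mul (by positivity), pow_succ]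
          ring_nf
  · calc ∫⁻ v in (ball 0 R)ᶜ, ENNReal.ofReal (g v * ‖v‖) ∂μ
        ≤ ∫⁻ v in (ball 0 R)ᶜ, ENNReal.ofReal R⁻¹ * ENNReal.ofReal (g v * (1 + ‖v‖) ^ 2) ∂μ := by
          refine setLIntegral_mono' measurableSet_ball.compl fun v hv => ?_
          rw [Set.mem_compl_iff, mem_ball_zero_iff, not_lt] at hv
          rw [← ENNReal.ofReal_mul (by positivity)]
          refine ENNReal.ofReal_le_ofReal ?_
          rw [le_inv_mul_iff₀ hR]
          have := hg0 v
          nlinarith [mul_le_mul_of_nonneg_left hv (mul_nonneg this (norm_nonneg v))]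
      _ ≤ ENNReal.ofReal R⁻¹ * ∫⁻ v, ENNReal.ofReal (g v * (1 + ‖v‖) ^ 2) ∂μ := by
          rw [lintegral_const_mul' _ _ ENNReal.ofReal_ne_top]
          gcongr
          exact Measure.restrict_le_self

lemma lintegral_mul_norm_le_moment_rpow {g : E → ℝ} {M : ℝ} {e : ℝ≥0∞} (hg0 : ∀ v, 0 ≤ g v)
    (hgM : ∀ v, g v ≤ M) (hM : 0 < M) (he : e ≠ 0)
    (hmom : ∫⁻ v, ENNReal.ofReal (g v * (1 + ‖v‖) ^ 2) ∂μ ≤ e) :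
    ∫⁻ v, ENNReal.ofReal (g v * ‖v‖) ∂μ ≤
      (μ (ball 0 1) + 1) * ENNReal.ofReal M ^ (1 / (Module.finrank ℝ E + 2 : ℝ)) *
        e ^ ((Module.finrank ℝ E + 1 : ℝ) / (Module.finrank ℝ E + 2)) := by
  set n := Module.finrank ℝ E
  rcases eq_or_ne e ⊤ with rfl | htop
  · rw [ENNReal.top_rpow_of_pos (by positivity), ENNReal.mul_top]
    · exact le_top
    · exact mul_ne_zero (by simp) (by simp [hM])
  obtain ⟨e, he0, rfl⟩ : ∃ e' : ℝ, 0 < e' ∧ e = ENNReal.ofReal e' :=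
    ⟨e.toReal, ENNReal.toReal_pos he htop, (ENNReal.ofReal_toReal htop).symm⟩
  have root_pow {x : ℝ} (hx : 0 < x) (k : ℕ) :
      (x ^ (1 / (n + 2 : ℝ))) ^ k = x ^ ((k : ℝ) / (n + 2)) := by
    rw [← Real.rpow_natCast, ← Real.rpow_mul hx.le]
    ring_nf
  set a := e ^ (1 / (n + 2 : ℝ))
  set b := M ^ (1 / (n + 2 : ℝ))
  have ha : 0 < a := by positivity
  have hb : 0 < b := by positivity
  have hae : a ^ (n + 2) = e := by
    rw [root_pow he0, Nat.cast_add, Nat.cast_two, div_self (by positivity), Real.rpow_one]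
  have hbM : b ^ (n + 2) = M := by
    rw [root_pow hM, Nat.cast_add, Nat.cast_two, div_self (by positivity), Real.rpow_one]
  -- the radius `R = a / b` balances the two halves of the split: both equal `b * a ^ (n + 1)`
  calc ∫⁻ v, ENNReal.ofReal (g v * ‖v‖) ∂μ
      ≤ ENNReal.ofReal (M * (a / b) ^ (n + 1)) * μ (ball 0 1) +
          ENNReal.ofReal (a / b)⁻¹ * ENNReal.ofReal e :=
        (lintegral_mul_norm_le_of_radius μ (R := a / b) hg0 hgM (by positivity)).trans (by gcongr)
    _ = (μ (ball 0 1) + 1) * ENNReal.ofReal (b * a ^ (n + 1)) := by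
        rw [← ENNReal.ofReal_mul (by positivity)]
        have h1 : M * (a / b) ^ (n + 1) = b * a ^ (n + 1) := by
          rw [div_pow, ← hbM]; field_simp; ring
        have h2 : (a / b)⁻¹ * e = b * a ^ (n + 1) := by
          rw [← hae]; field_simp; ring
        rw [h1, h2]
        ring
    _ = _ := by
        rw [mul_assoc, ENNReal.ofReal_mul hb.le, ENNReal.ofReal_rpow_of_pos hM,
          ENNReal.ofReal_rpow_of_pos he0, root_pow he0]
        push_cast
        rfl

lemma ofReal_norm_integral_smul_rpow_le {g : E → ℝ} {M p : ℝ} (hg0 : ∀ v, 0 ≤ g v)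
    (hgM : ∀ v, g v ≤ M) (hM : 1 ≤ M) (hp1 : 1 ≤ p)
    (hp : p ≤ (Module.finrank ℝ E + 2 : ℝ) / (Module.finrank ℝ E + 1)) :
    ENNReal.ofReal ‖∫ v, g v • v ∂μ‖ ^ p ≤
      ((μ (ball 0 1) + 1) * ENNReal.ofReal M ^ (1 / (Module.finrank ℝ E + 2 : ℝ))) ^
          ((Module.finrank ℝ E + 2 : ℝ) / (Module.finrank ℝ E + 1)) *
        ∫⁻ v, ENNReal.ofReal (g v * (1 + ‖v‖) ^ 2) ∂μ := by
  have h_current : ENNReal.ofReal ‖∫ v, g v • v ∂μ‖ ≤ ∫⁻ v, ENNReal.ofReal (g v * ‖v‖) ∂μ := by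
    rw [ofReal_norm]
    refine (enorm_integral_le_lintegral_enorm _).trans_eq (lintegral_congr fun v => ?_)
    rw [← ofReal_norm, norm_smul, Real.norm_of_nonneg (hg0 v)]
  have h_moment : ∫⁻ v, ENNReal.ofReal (g v * ‖v‖) ∂μ ≤
      ∫⁻ v, ENNReal.ofReal (g v * (1 + ‖v‖) ^ 2) ∂μ :=
    lintegral_mono fun v => ENNReal.ofReal_le_ofReal <|
      mul_le_mul_of_nonneg_left (by nlinarith [norm_nonneg v]) (hg0 v)
  have hD : 1 ≤ (μ (ball 0 1) + 1) * ENNReal.ofReal M ^ (1 / (Module.finrank ℝ E + 2 : ℝ)) :=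
    one_le_mul le_add_self (ENNReal.one_le_rpow (by simpa using hM) (by positivity))
  rw [← inv_div (Module.finrank ℝ E + 1 : ℝ)] at hp ⊢
  exact rpow_le_mul_of_le_of_le_mul_rpow hD (by positivity) hp1 hp (h_current.trans h_moment)
    fun he => h_current.trans <| lintegral_mul_norm_le_moment_rpow μ hg0 hgM (by linarith)
      (zero_lt_one.trans he).ne' le_rfl

end VelocityMoments

/-- `L^p` bound (1 ≤ p ≤ 5/4) for the current `j(x) = ∫ v f(x,v) dv`:
`‖|j|‖_{L^p} ≤ C(M) (1 + ∫∫ (1+|v|)² f)`, with `C(M)` depending only on `M`. -/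
theorem current_Lp_bound (M : ℝ) (hM : 0 ≤ M) :
    ∃ C : ℝ, 0 < C ∧
      ∀ (f : E3 × E3 → ℝ) (p : ℝ),
        Measurable f → (∀ z, 0 ≤ f z) → (∀ z, f z ≤ M) →
        (∫⁻ z : E3 × E3, ENNReal.ofReal (f z * (1 + ‖z.2‖) ^ 2)) < ⊤ →
        1 ≤ p → p ≤ 5 / 4 →
        (∫⁻ x : E3, (ENNReal.ofReal ‖∫ v : E3, f (x, v) • v‖) ^ p) ^ (1 / p)
          ≤ ENNReal.ofReal
              (C * (1 + (∫⁻ z : E3 × E3,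
                ENNReal.ofReal (f z * (1 + ‖z.2‖) ^ 2)).toReal)) := by
  set K : ℝ≥0∞ :=
    ((volume (ball (0 : E3) 1) + 1) * ENNReal.ofReal (M + 1) ^ (1 / 5 : ℝ)) ^ (5 / 4 : ℝ)
  have hK1 : 1 ≤ K := ENNReal.one_le_rpow (one_le_mul le_add_self
    (ENNReal.one_le_rpow (by simpa using hM) (by norm_num))) (by norm_num)
  have hK : K ≠ ⊤ := ENNReal.rpow_ne_top_of_nonneg (by norm_num) (ENNReal.mul_ne_top
    (ENNReal.add_ne_top.2 ⟨measure_ball_lt_top.ne, ENNReal.one_ne_top⟩)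
    (ENNReal.rpow_ne_top_of_nonneg (by norm_num) ENNReal.ofReal_ne_top))
  refine ⟨K.toReal, ENNReal.toReal_pos (zero_lt_one.trans_le hK1).ne' hK, ?_⟩
  intro f p hf hf0 hfM hI hp1 hp
  set I := ∫⁻ z : E3 × E3, ENNReal.ofReal (f z * (1 + ‖z.2‖) ^ 2)
  have h_pointwise (x : E3) : ENNReal.ofReal ‖∫ v : E3, f (x, v) • v‖ ^ p ≤
      K * ∫⁻ v : E3, ENNReal.ofReal (f (x, v) * (1 + ‖v‖) ^ 2) := by
    have := ofReal_norm_integral_smul_rpow_le volume (fun v => hf0 (x, v))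
      (fun v => (hfM (x, v)).trans (le_add_of_nonneg_right zero_le_one)) (by linarith) hp1
      (by rw [finrank_euclideanSpace_fin]; norm_num; linarith)
    rw [finrank_euclideanSpace_fin] at this
    convert this using 4 <;> norm_num
  have h_integral : ∫⁻ x : E3, ENNReal.ofReal ‖∫ v : E3, f (x, v) • v‖ ^ p ≤ K * I := by
    simp only [I]
    rw [Measure.volume_eq_prod, lintegral_prod _ (by fun_prop), ← lintegral_const_mul' _ _ hK]
    exact lintegral_mono h_pointwise
  calc (∫⁻ x : E3, ENNReal.ofReal ‖∫ v : E3, f (x, v) • v‖ ^ p) ^ (1 / p)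
      ≤ (K * I) ^ (1 / p) := ENNReal.rpow_le_rpow h_integral (by positivity)
    _ ≤ 1 + K * I :=
        rpow_le_one_add_self _ (by positivity) (by rw [div_le_one (by linarith)]; exact hp1)
    _ ≤ K * (1 + I) := by rw [mul_add, mul_one]; gcongr
    _ = ENNReal.ofReal (K.toReal * (1 + I.toReal)) := by
        rw [ENNReal.ofReal_mul ENNReal.toReal_nonneg, ENNReal.ofReal_toReal hK,
          ENNReal.ofReal_add zero_le_one ENNReal.toReal_nonneg, ENNReal.ofReal_one,
          ENNReal.ofReal_toReal hI.ne]
end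

section
/- Let f : ℝ³_x × ℝ³_v → ℝ be nonnegative measurable with ‖f‖_{L∞} ≤ M, let 0 < μ < λ, and suppose ∫∫ |v|^λ f dx dv < ∞. Then ‖∫_{ℝ³_v} |v|^μ f(·, v) dv‖_{L^{(3+λ)/(3+μ)}(ℝ³_x)} ≤ C(λ, μ) · M^{(λ-μ)/(3+λ)} · (∫∫ |v|^λ f dx dv)^{(3+μ)/(3+λ)}. -/
/-!
Split the velocity integral at radius `R`. On the ball `|v| < R` use `f ≤ M`, which costs
`M |B₁| R^(d+m)`; outside it use `|v|^m ≤ R^(m-l) |v|^l`, which costs `R^(m-l) ∫ f |v|^l`.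
Optimising in `R` gives, for every `x`, `∫ |v|^m f(x,v) dv ≤ C M^(1-θ) (∫ |v|^l f(x,v) dv)^θ`
with `θ = (d+m)/(d+l)` and `C = |B₁| + 1`. Raising this to the power `1/θ` makes the right-hand side linear in
the `l`-th moment at `x`, so integrating in `x` and applying Tonelli gives the estimate.
-/

open MeasureTheory ENNReal

open Metric Module

theorem exists_pos_mul_rpow_add_rpow_mul_eq {d l m M G : ℝ} (V : ℝ) (hM : 0 < M) (hG : 0 < G)
    (hdl : 0 < d + l) :
    ∃ R, 0 < R ∧ M * V * R ^ (d + m) + R ^ (m - l) * G =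
      (V + 1) * M ^ ((l - m) / (d + l)) * G ^ ((d + m) / (d + l)) := by
  have hGM : 0 < G / M := div_pos hG hM
  refine ⟨(G / M) ^ (d + l)⁻¹, by positivity, ?_⟩
  have hpow (e : ℝ) : ((G / M) ^ (d + l)⁻¹) ^ e = (G / M) ^ (e / (d + l)) := by
    rw [← Real.rpow_mul hGM.le, inv_mul_eq_div]
  have hθ : (m - l) / (d + l) = (d + m) / (d + l) - 1 := by field_simp; ring
  have hθ' : (l - m) / (d + l) = 1 - (d + m) / (d + l) := by field_simp; ring
  rw [hpow, hpow, hθ, hθ', Real.rpow_sub hGM, Real.rpow_sub hM, Real.rpow_one, Real.rpow_one,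
    Real.div_rpow hG.le hM.le]
  have := Real.rpow_pos_of_pos hM ((d + m) / (d + l))
  field_simp

theorem setLIntegral_compl_ball_mul_rpow_norm_le {E : Type*} [SeminormedAddCommGroup E]
    [MeasurableSpace E] [OpensMeasurableSpace E] (μ : Measure E) {f : E → ℝ} {l m R : ℝ}
    (hf0 : ∀ v, 0 ≤ f v) (hml : m ≤ l) (hR : 0 < R) :
    ∫⁻ v in (ball 0 R)ᶜ, .ofReal (f v * ‖v‖ ^ m) ∂μ ≤
      .ofReal (R ^ (m - l)) * ∫⁻ v, .ofReal (f v * ‖v‖ ^ l) ∂μ := by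
  calc ∫⁻ v in (ball 0 R)ᶜ, .ofReal (f v * ‖v‖ ^ m) ∂μ
      ≤ ∫⁻ v in (ball 0 R)ᶜ, .ofReal (R ^ (m - l)) * .ofReal (f v * ‖v‖ ^ l) ∂μ := by
        refine setLIntegral_mono' measurableSet_ball.compl fun v hv => ?_
        have hRv : R ≤ ‖v‖ := by simpa using hv
        have hv0 : 0 < ‖v‖ := hR.trans_le hRv
        rw [← ofReal_mul (by positivity)]
        refine ofReal_le_ofReal ?_
        calc f v * ‖v‖ ^ m = ‖v‖ ^ (m - l) * (f v * ‖v‖ ^ l) := by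
              rw [Real.rpow_sub hv0]; field_simp
          _ ≤ R ^ (m - l) * (f v * ‖v‖ ^ l) :=
              mul_le_mul_of_nonneg_right (Real.rpow_le_rpow_of_nonpos hR hRv (by linarith))
                (mul_nonneg (hf0 v) (by positivity))
    _ = .ofReal (R ^ (m - l)) * ∫⁻ v in (ball 0 R)ᶜ, .ofReal (f v * ‖v‖ ^ l) ∂μ :=
        lintegral_const_mul' _ _ ofReal_ne_top
    _ ≤ .ofReal (R ^ (m - l)) * ∫⁻ v, .ofReal (f v * ‖v‖ ^ l) ∂μ :=
        mul_le_mul_right (setLIntegral_le_lintegral _ _) _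

theorem lintegral_mul_rpow_norm_eq_zero {E : Type*} [SeminormedAddCommGroup E]
    [MeasurableSpace E] [OpensMeasurableSpace E] (μ : Measure E) {f : E → ℝ} {l m : ℝ}
    (hf : Measurable f) (hf0 : ∀ v, 0 ≤ f v) (hm : m ≠ 0)
    (hl : ∫⁻ v, .ofReal (f v * ‖v‖ ^ l) ∂μ = 0) :
    ∫⁻ v, .ofReal (f v * ‖v‖ ^ m) ∂μ = 0 := by
  have hmeas : Measurable fun v => ENNReal.ofReal (f v * ‖v‖ ^ l) := by fun_prop
  refine lintegral_eq_zero_of_ae_eq_zero ?_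
  filter_upwards [(lintegral_eq_zero_iff hmeas).1 hl] with v hv
  have hfv : f v * ‖v‖ ^ l = 0 :=
    le_antisymm (ofReal_eq_zero.1 hv) (mul_nonneg (hf0 v) (Real.rpow_nonneg (norm_nonneg v) l))
  rcases mul_eq_zero.1 hfv with h | h
  · simp [h]
  · simp [Real.rpow_eq_zero_iff_of_nonneg (norm_nonneg v) |>.1 h |>.1, hm]

section HaarMeasure

variable {E : Type*} [NormedAddCommGroup E] [NormedSpace ℝ E] [FiniteDimensional ℝ E]
  [MeasurableSpace E] [BorelSpace E] (μ : Measure E) [μ.IsAddHaarMeasure]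

theorem setLIntegral_ball_mul_rpow_norm_le {f : E → ℝ} {M m R : ℝ} (hf0 : ∀ v, 0 ≤ f v)
    (hfM : ∀ v, f v ≤ M) (hm : 0 ≤ m) (hR : 0 < R) :
    ∫⁻ v in ball 0 R, .ofReal (f v * ‖v‖ ^ m) ∂μ ≤
      .ofReal (M * (μ (ball 0 1)).toReal * R ^ (finrank ℝ E + m)) := by
  have hM : 0 ≤ M := (hf0 0).trans (hfM 0)
  calc ∫⁻ v in ball 0 R, .ofReal (f v * ‖v‖ ^ m) ∂μ
      ≤ ∫⁻ _ in ball (0 : E) R, .ofReal (M * R ^ m) ∂μ := by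
        refine setLIntegral_mono' measurableSet_ball fun v hv => ofReal_le_ofReal ?_
        exact mul_le_mul (hfM v) (Real.rpow_le_rpow (norm_nonneg v)
          (mem_ball_zero_iff.1 hv).le hm) (by positivity) hM
    _ = .ofReal (M * R ^ m) * μ (ball 0 R) := setLIntegral_const _ _
    _ = .ofReal (M * (μ (ball 0 1)).toReal * R ^ (finrank ℝ E + m)) := by
        rw [Measure.addHaar_ball_of_pos μ 0 hR, ← ofReal_toReal measure_ball_lt_top.ne,
          ← ofReal_mul (by positivity), ← ofReal_mul (by positivity), ofReal_toReal
          measure_ball_lt_top.ne, Real.rpow_add hR, Real.rpow_natCast]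
        ring_nf

theorem lintegral_mul_rpow_norm_le_mul_rpow {f : E → ℝ} {M l m : ℝ} (hf : Measurable f)
    (hf0 : ∀ v, 0 ≤ f v) (hfM : ∀ v, f v ≤ M) (hm : 0 < m) (hml : m ≤ l) :
    ∫⁻ v, .ofReal (f v * ‖v‖ ^ m) ∂μ ≤
      .ofReal (((μ (ball 0 1)).toReal + 1) * M ^ ((l - m) / (finrank ℝ E + l))) *
        (∫⁻ v, .ofReal (f v * ‖v‖ ^ l) ∂μ) ^ ((finrank ℝ E + m) / (finrank ℝ E + l)) := by
  set V := (μ (ball 0 1)).toReal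
  set G := ∫⁻ v, .ofReal (f v * ‖v‖ ^ l) ∂μ
  have hdl : (0 : ℝ) < finrank ℝ E + l := by have := hm.trans_le hml; positivity
  obtain hM | hM := ((hf0 0).trans (hfM 0)).eq_or_lt
  · have hf : ∀ v, f v = 0 := fun v => le_antisymm (hM ▸ hfM v) (hf0 v)
    simp [hf]
  obtain hG | hG := eq_top_or_lt_top G
  · rw [hG, top_rpow_of_pos (by positivity), mul_top (by positivity)]
    exact le_top
  obtain hG0 | hG0 := eq_or_ne G 0
  · rw [lintegral_mul_rpow_norm_eq_zero μ hf hf0 hm.ne' hG0]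
    exact zero_le
  obtain ⟨R, hR, hRopt⟩ :=
    exists_pos_mul_rpow_add_rpow_mul_eq (m := m) V hM (toReal_pos hG0 hG.ne) hdl
  calc ∫⁻ v, .ofReal (f v * ‖v‖ ^ m) ∂μ
      = ∫⁻ v in ball 0 R, .ofReal (f v * ‖v‖ ^ m) ∂μ +
          ∫⁻ v in (ball 0 R)ᶜ, .ofReal (f v * ‖v‖ ^ m) ∂μ :=
        (lintegral_add_compl _ measurableSet_ball).symm
    _ ≤ .ofReal (M * V * R ^ (finrank ℝ E + m)) + .ofReal (R ^ (m - l)) * G :=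
        add_le_add (setLIntegral_ball_mul_rpow_norm_le μ hf0 hfM hm.le hR)
          (setLIntegral_compl_ball_mul_rpow_norm_le μ hf0 hml hR)
    _ = .ofReal ((V + 1) * M ^ ((l - m) / (finrank ℝ E + l))) *
          G ^ ((finrank ℝ E + m) / (finrank ℝ E + l)) := by
        rw [← ofReal_toReal hG.ne, ← ofReal_mul (by positivity), ← ofReal_add (by positivity)
          (by positivity), hRopt, ofReal_rpow_of_nonneg toReal_nonneg (by positivity),
          ← ofReal_mul (by positivity)]

end HaarMeasure

theorem lintegral_rpow_rpow_le_of_le_mul_rpow {α : Type*} [MeasurableSpace α] {ν : Measure α}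
    {F G : α → ℝ≥0∞} {A : ℝ≥0∞} {p q : ℝ} (hp : 0 < p) (hpq : p * q = 1) (hA : A ≠ ⊤)
    (hFG : ∀ x, F x ≤ A * G x ^ q) :
    (∫⁻ x, F x ^ p ∂ν) ^ q ≤ A * (∫⁻ x, G x ∂ν) ^ q := by
  have hq : 0 < q := pos_of_mul_pos_right (hpq ▸ one_pos) hp.le
  calc (∫⁻ x, F x ^ p ∂ν) ^ q
      ≤ (∫⁻ x, A ^ p * G x ∂ν) ^ q := by
        gcongr with x
        calc F x ^ p ≤ (A * G x ^ q) ^ p := by gcongr; exact hFG x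
          _ = A ^ p * G x := by
            rw [mul_rpow_of_nonneg _ _ hp.le, ← rpow_mul, mul_comm q, hpq, rpow_one]
    _ = (A ^ p * ∫⁻ x, G x ∂ν) ^ q := by
        rw [lintegral_const_mul' _ _ (rpow_ne_top_of_nonneg hp.le hA)]
    _ = A * (∫⁻ x, G x ∂ν) ^ q := by
        rw [mul_rpow_of_nonneg _ _ hq.le, ← rpow_mul, hpq, rpow_one]

/-- Weighted velocity-averaging estimate: for `0 < μ < λ` there is `C(λ,μ)` with
`‖∫ |v|^μ f dv‖_{L^{(3+λ)/(3+μ)}_x} ≤ C M^{(λ-μ)/(3+λ)} (∫∫ |v|^λ f)^{(3+μ)/(3+λ)}`. -/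
theorem weighted_velocity_averaging (l m : ℝ) (hm : 0 < m) (hml : m < l) :
    ∃ C : ℝ, 0 < C ∧
      ∀ (f : E3 × E3 → ℝ) (M : ℝ),
        Measurable f → (∀ z, 0 ≤ f z) → (∀ z, f z ≤ M) → 0 ≤ M →
        (∫⁻ z : E3 × E3, ENNReal.ofReal (f z * ‖z.2‖ ^ l)) < ⊤ →
        (∫⁻ x : E3,
            (∫⁻ v : E3, ENNReal.ofReal (f (x, v) * ‖v‖ ^ m)) ^ ((3 + l) / (3 + m)))
              ^ ((3 + m) / (3 + l))
          ≤ ENNReal.ofReal (C * M ^ ((l - m) / (3 + l))) *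
            (∫⁻ z : E3 × E3, ENNReal.ofReal (f z * ‖z.2‖ ^ l)) ^ ((3 + m) / (3 + l)) := by
  have hd : (finrank ℝ E3 : ℝ) = 3 := by simp
  have h3l : (0 : ℝ) < 3 + l := by linarith
  have h3m : (0 : ℝ) < 3 + m := by linarith
  refine ⟨(volume (ball (0 : E3) 1)).toReal + 1, by positivity, fun f M hf hf0 hfM _ _ => ?_⟩
  have hslice (x : E3) := lintegral_mul_rpow_norm_le_mul_rpow volume
    (hf.comp measurable_prodMk_left) (fun v => hf0 (x, v)) (fun v => hfM (x, v)) hm hml.le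
  rw [hd] at hslice
  rw [Measure.volume_eq_prod, lintegral_prod _ (by fun_prop)]
  exact lintegral_rpow_rpow_le_of_le_mul_rpow (by positivity) (by field_simp) ofReal_ne_top hslice
end
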